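/- Soundness of the loop induction axiom: For every interpretation I, valuation v ∈ Val̂, ω ∈ Ω, program α of the SDE-free language, and formula φ, the formula [α*]sure(φ → [α]φ) → sure(φ → [α*]φ) evaluates to ⊕ under I at v and ω (where [α]ψ abbreviates ¬⟨α⟩¬ψ). -/

import Mathlib

open scoped Classical

noncomputable section

/-! ## Basic domains -/

/-- `ℝ_⊥ = ℝ ∪ {⊥}`, with `⊥` modeled as `none`. -/
def Rbot : Type := Option ℝ

namespace Rbot

/-- The undefined element `⊥`. -/
def bot : Rbot := none

/-- Embedding of the reals. -/
def real (r : ℝ) : Rbot := Option.some r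

/-- Addition, with `⊥` absorbing. -/
def add (a b : Rbot) : Rbot := Option.bind a fun x => Option.map (fun y => x + y) b

/-- Multiplication, with `⊥` absorbing. -/
def mul (a b : Rbot) : Rbot := Option.bind a fun x => Option.map (fun y => x * y) b

/-- The Borel σ-algebra of the topology generated by the open sets of `ℝ`
together with `{⊥}`: a set is measurable iff its trace on `ℝ` is Borel. -/
instance : MeasurableSpace Rbot :=
  MeasurableSpace.map Option.some (inferInstance : MeasurableSpace ℝ)

end Rbot

/-- Three-valued Łukasiewicz truth values `⊖ < ⊘ < ⊕`, modeled as `Fin 3`. -/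
abbrev L : Type := Fin 3

namespace L
/-- false `⊖` -/
def fls : L := 0
/-- indeterminate `⊘` -/
def ind : L := 1
/-- true `⊕` -/
def tru : L := 2
/-- negation: swaps `⊕` and `⊖`, fixes `⊘`. -/
def neg (a : L) : L := tru - a
end L

/-- `Val̂`: maps `V → ℝ_⊥` that are `⊥` at all but finitely many variables
(the countable variable set `V` is modeled as `ℕ`). -/
def ValHat : Type := {f : ℕ → Rbot // {n | f n ≠ Rbot.bot}.Finite}

instance : MeasurableSpace ValHat :=
  @Subtype.instMeasurableSpace (ℕ → Rbot) _ MeasurableSpace.pi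

/-- Update a valuation at one variable. -/
def ValHat.update (v : ValHat) (x : ℕ) (r : Rbot) : ValHat :=
  ⟨Function.update v.1 x r, by
    apply (v.2.union (Set.finite_singleton x)).subset
    intro n hn
    rcases eq_or_ne n x with h | h
    · exact Or.inr h
    · refine Or.inl ?_
      simpa [Function.update_of_ne h] using hn⟩

/-- `Val = Val̂ ∪ {▽, △}`: valuations together with the crash point `▽`
(`crash`) and the out-of-bounds point `△` (`oob`). -/
inductive Val where
  | ok : ValHat → Val
  | crash : Val
  | oob : Val

/-- Measurable sets of `Val` are the sets whose trace on `Val̂` is measurable. -/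
instance : MeasurableSpace Val := MeasurableSpace.map Val.ok inferInstance

/-- Choice sequences: binary streams that are `0` (`false`) at all but
finitely many indices. -/
def Cseq : Type := {c : ℕ → Bool // {n | c n = true}.Finite}

namespace Cseq

def head (C : Cseq) : Bool := C.1 0

def tail (C : Cseq) : Cseq :=
  ⟨fun n => C.1 (n + 1), by
    have h : {n | C.1 (n + 1) = true} = Nat.succ ⁻¹' {n | C.1 n = true} := rfl
    rw [h]
    exact C.2.preimage Nat.succ_injective.injOn⟩

/-- `tail(n, C) := tailⁿ(C)`. -/
def tailN (n : ℕ) (C : Cseq) : Cseq := tail^[n] C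

/-- `nat(C)`: the least position holding a `0`. -/
def nat (C : Cseq) : ℕ := sInf {p | C.1 p = false}

end Cseq

/-! ## Sample space -/

/-- The fixed sample space `(Ω, F, P)`, carrying a family of i.i.d.
uniform-`[0,1]` random variables. -/
structure SampleSpace where
  Ω : Type
  [mΩ : MeasurableSpace Ω]
  P : MeasureTheory.Measure Ω
  isProb : MeasureTheory.IsProbabilityMeasure P
  U : ℕ → Ω → ℝ
  U_meas : ∀ n, Measurable (U n)
  U_unif : ∀ n, MeasureTheory.Measure.map (U n) P = MeasureTheory.volume.restrict (Set.Icc (0 : ℝ) 1)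
  U_indep : ProbabilityTheory.iIndepFun U P

attribute [instance] SampleSpace.mΩ

/-! ## Syntax of the SDE-free language -/

mutual
/-- Terms: constants, variables, special 0-ary symbols `•_i` (used by
substitutions), sums, products, function symbols, definite descriptions. -/
inductive Term where
  | const : ℝ → Term
  | var : ℕ → Term
  | bullet : ℕ → Term
  | add : Term → Term → Term
  | mul : Term → Term → Term
  | func : (d : ℕ) → ℕ → (Fin d → Term) → Term
  | iota : ℕ → Finset ℕ → Formula → Term

/-- Programs of the SDE-free fragment. -/
inductive Program where
  | assign : ℕ → Term → Program
  | sample : ℕ → Program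
  | ite : Formula → Program → Program → Program
  | choice : Program → Program → Program
  | seq : Program → Program → Program
  | star : Program → Program
  | skip : Program
  | fail : Program
  | psym : ℕ → Program

/-- Formulas. -/
inductive Formula where
  | ge : Term → Term → Formula
  | not : Formula → Formula
  | and : Formula → Formula → Formula
  | pred : (d : ℕ) → ℕ → (Fin d → Term) → Formula
  | dia : Program → Formula → Formula
  | sure : Formula → Formula
end

/-! ## Interpretations -/

/-- An interpretation: measurable meanings for function and predicate symbols,
values for the special symbols `•_i`, meanings for program symbols satisfying
the no-look-ahead and measurability conditions, and a countable set of
stop times `I_times ⊆ ℝ⁺`. -/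
structure Interp (S : SampleSpace) where
  fn : ℕ → (d : ℕ) → (Fin d → Rbot) → Rbot
  fn_meas : ∀ name d, Measurable (fn name d)
  bullet : ℕ → Rbot
  pr : ℕ → (d : ℕ) → (Fin d → Rbot) → S.Ω → L
  pr_meas : ∀ name d, Measurable (Function.uncurry (pr name d))
  pg : ℕ → Val → S.Ω → Cseq → Val × Cseq
  pg_nla : ∀ name v ω C, ∃ n, (pg name v ω C).2 = Cseq.tailN n C ∧
    ∀ C' : Cseq, (∀ k < n, C'.1 k = C.1 k) →
      (pg name v ω C').1 = (pg name v ω C).1 ∧ (pg name v ω C').2 = Cseq.tailN n C'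
  pg_meas : ∀ name (z : S.Ω → Val), Measurable z → ∀ C,
    Measurable fun ω => (pg name (z ω) ω C).1
  times : Set ℝ
  times_cnt : times.Countable
  times_pos : ∀ t ∈ times, 0 ≤ t

/-! ## Semantics -/

mutual
/-- Term semantics `I𝐱⟦θ⟧ : Val̂ → ℝ_⊥`. -/
noncomputable def tSem (S : SampleSpace) (I : Interp S) : Term → ValHat → Rbot
  | .const c, _ => Rbot.real c
  | .var x, v => v.1 x
  | .bullet i, _ => I.bullet i
  | .add θ κ, v => Rbot.add (tSem S I θ v) (tSem S I κ v)
  | .mul θ κ, v => Rbot.mul (tSem S I θ v) (tSem S I κ v)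
  | .func d name ts, v => I.fn name d fun i => tSem S I (ts i) v
  | .iota i ds φ, v =>
      let can : ValHat → Rbot := fun u =>
        if h : ∃! y : ValHat, (∀ n, n ∉ ds → y.1 n = u.1 n) ∧
            ∀ ω : S.Ω, fSem S I φ y ω 0 = L.tru
        then h.choose.1 i else Rbot.bot
      if Measurable can then can v else Rbot.bot

/-- Program semantics `Iv⟦α⟧(ω, C) ∈ Val × 𝒞`, threading a counter used to
pick never-before-used uniform random variables for `x := *`. -/
noncomputable def pSem (S : SampleSpace) (I : Interp S) :
    Program → Val → S.Ω → Cseq → ℕ → Val × Cseq × ℕ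
  | _, .crash, _, C, n => (.crash, C, n)
  | _, .oob, _, C, n => (.oob, C, n)
  | .assign x θ, .ok v, _, C, n =>
      let r := tSem S I θ v
      if r = Rbot.bot then (.crash, C, n) else (.ok (v.update x r), C, n)
  | .sample x, .ok v, ω, C, n => (.ok (v.update x (Rbot.real (S.U n ω))), C, n + 1)
  | .ite H α β, .ok v, ω, C, n =>
      if fSem S I H v ω n = L.tru then pSem S I α (.ok v) ω C n
      else if fSem S I H v ω n = L.fls then pSem S I β (.ok v) ω C n
      else (.crash, C, n)
  | .choice α β, .ok v, ω, C, n =>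
      if C.head = false then pSem S I α (.ok v) ω C.tail n
      else pSem S I β (.ok v) ω C.tail n
  | .seq α β, .ok v, ω, C, n =>
      let r := pSem S I α (.ok v) ω C n
      pSem S I β r.1 ω r.2.1 r.2.2
  | .star α, .ok v, ω, C, n =>
      (Nat.rec (motive := fun _ => Val → Cseq → ℕ → Val × Cseq × ℕ)
        (fun u D m => (u, D, m))
        (fun _ ih u D m =>
          let r := pSem S I α u ω D m
          ih r.1 r.2.1 r.2.2)
        C.nat) (.ok v) (Cseq.tailN C.nat C) n
  | .psym g, .ok v, ω, C, n => ((I.pg g (.ok v) ω C).1, (I.pg g (.ok v) ω C).2, n)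
  | .skip, .ok v, _, C, n => (.ok v, C, n)
  | .fail, .ok _, _, C, n => (.crash, C, n)

/-- Formula semantics `Iv⟦φ⟧(ω) ∈ L` (with the freshness counter threaded). -/
noncomputable def fSem (S : SampleSpace) (I : Interp S) :
    Formula → ValHat → S.Ω → ℕ → L
  | .ge θ κ, v, _, _ =>
      let a := tSem S I θ v
      let b := tSem S I κ v
      if a = Rbot.bot ∨ b = Rbot.bot then L.ind
      else if ∃ x y : ℝ, a = Rbot.real x ∧ b = Rbot.real y ∧ y ≤ x then L.tru
      else L.fls
  | .not φ, v, ω, n => L.neg (fSem S I φ v ω n)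
  | .and φ ψ, v, ω, n => min (fSem S I φ v ω n) (fSem S I ψ v ω n)
  | .pred d name ts, v, ω, _ => I.pr name d (fun i => tSem S I (ts i) v) ω
  | .dia α φ, v, ω, n =>
      sSup {l : L | ∃ C : Cseq,
        (pSem S I α (.ok v) ω C n).1 ≠ Val.oob ∧
        l = (match pSem S I α (.ok v) ω C n with
             | (Val.ok w, _, m) => fSem S I φ w ω m
             | _ => L.ind)}
  | .sure φ, v, ω, n => if fSem S I φ v ω n = L.tru then L.tru else L.fls
end

/-- `Iv⟦θ⟧` extended to `Val` by `I▽⟦θ⟧ = I△⟦θ⟧ = ⊥`. -/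
noncomputable def termVal (S : SampleSpace) (I : Interp S) (θ : Term) : Val → Rbot
  | .ok v => tSem S I θ v
  | _ => Rbot.bot

/-- `Iv⟦φ⟧(ω)` extended to `Val` by `I▽⟦φ⟧(ω) = I△⟦φ⟧(ω) = ⊘`. -/
noncomputable def fmlVal (S : SampleSpace) (I : Interp S) (φ : Formula) :
    Val → S.Ω → L
  | .ok v, ω => fSem S I φ v ω 0
  | _, _ => L.ind

/-- `Iv⟦α⟧(ω, C) ∈ Val × 𝒞`. -/
noncomputable def prgVal (S : SampleSpace) (I : Interp S) (α : Program)
    (v : Val) (ω : S.Ω) (C : Cseq) : Val × Cseq :=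
  ((pSem S I α v ω C 0).1, (pSem S I α v ω C 0).2.1)

/-! ## Expressions and subexpressions -/

/-- An expression: a term, a program, or a formula. -/
inductive Expr where
  | trm : Term → Expr
  | prg : Program → Expr
  | fml : Formula → Expr

/-- The immediate-subexpression relation. -/
inductive ImmSub : Expr → Expr → Prop
  | addL (θ κ : Term) : ImmSub (.trm θ) (.trm (.add θ κ))
  | addR (θ κ : Term) : ImmSub (.trm κ) (.trm (.add θ κ))
  | mulL (θ κ : Term) : ImmSub (.trm θ) (.trm (.mul θ κ))
  | mulR (θ κ : Term) : ImmSub (.trm κ) (.trm (.mul θ κ))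
  | funcArg (d name : ℕ) (ts : Fin d → Term) (i : Fin d) :
      ImmSub (.trm (ts i)) (.trm (.func d name ts))
  | iotaBody (i : ℕ) (ds : Finset ℕ) (φ : Formula) :
      ImmSub (.fml φ) (.trm (.iota i ds φ))
  | assignT (x : ℕ) (θ : Term) : ImmSub (.trm θ) (.prg (.assign x θ))
  | iteH (H : Formula) (α β : Program) : ImmSub (.fml H) (.prg (.ite H α β))
  | iteL (H : Formula) (α β : Program) : ImmSub (.prg α) (.prg (.ite H α β))
  | iteR (H : Formula) (α β : Program) : ImmSub (.prg β) (.prg (.ite H α β))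
  | choiceL (α β : Program) : ImmSub (.prg α) (.prg (.choice α β))
  | choiceR (α β : Program) : ImmSub (.prg β) (.prg (.choice α β))
  | seqL (α β : Program) : ImmSub (.prg α) (.prg (.seq α β))
  | seqR (α β : Program) : ImmSub (.prg β) (.prg (.seq α β))
  | starBody (α : Program) : ImmSub (.prg α) (.prg (.star α))
  | geL (θ κ : Term) : ImmSub (.trm θ) (.fml (.ge θ κ))
  | geR (θ κ : Term) : ImmSub (.trm κ) (.fml (.ge θ κ))
  | notBody (φ : Formula) : ImmSub (.fml φ) (.fml (.not φ))
  | andL (φ ψ : Formula) : ImmSub (.fml φ) (.fml (.and φ ψ))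
  | andR (φ ψ : Formula) : ImmSub (.fml ψ) (.fml (.and φ ψ))
  | predArg (d name : ℕ) (ts : Fin d → Term) (i : Fin d) :
      ImmSub (.trm (ts i)) (.fml (.pred d name ts))
  | diaProg (α : Program) (φ : Formula) : ImmSub (.prg α) (.fml (.dia α φ))
  | diaBody (α : Program) (φ : Formula) : ImmSub (.fml φ) (.fml (.dia α φ))
  | sureBody (φ : Formula) : ImmSub (.fml φ) (.fml (.sure φ))

/-- `Subexpr a b`: `a` is a (reflexive-transitive) subexpression of `b`. -/
def Subexpr (a b : Expr) : Prop := Relation.ReflTransGen ImmSub a b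

/-- A formula contains no program as a subexpression. -/
def ProgFree (φ : Formula) : Prop := ∀ α : Program, ¬ Subexpr (.prg α) (.fml φ)

/-- A formula contains no formula (predicate) symbol as a subexpression. -/
def PredFree (φ : Formula) : Prop :=
  ∀ (d name : ℕ) (ts : Fin d → Term), ¬ Subexpr (.fml (.pred d name ts)) (.fml φ)

/-- Well-formedness of an expression of the SDE-free language: bodies of
definite descriptions contain no programs and no formula symbols, and the
tests of conditionals contain no programs. -/
def ExprWF (e : Expr) : Prop :=
  (∀ (i : ℕ) (ds : Finset ℕ) (φ : Formula),
      Subexpr (.trm (.iota i ds φ)) e → ProgFree φ ∧ PredFree φ) ∧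
  (∀ (H : Formula) (α β : Program),
      Subexpr (.prg (.ite H α β)) e → ProgFree H)

abbrev Term.WF (θ : Term) : Prop := ExprWF (.trm θ)
abbrev Program.WF (α : Program) : Prop := ExprWF (.prg α)
abbrev Formula.WF (φ : Formula) : Prop := ExprWF (.fml φ)

/-! ## Derived connectives -/

namespace Formula

/-- `φ ∨ ψ := ¬(¬φ ∧ ¬ψ)`. -/
def or (φ ψ : Formula) : Formula := .not (.and (.not φ) (.not ψ))

/-- `ind(φ) := ¬sure(φ) ∧ ¬sure(¬φ)`. -/
def indF (φ : Formula) : Formula := .and (.not (.sure φ)) (.not (.sure (.not φ)))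

/-- `φ₁ → φ₂ := ¬φ₁ ∨ φ₂ ∨ (ind(φ₁) ∧ ind(φ₂))`. -/
def imp (φ ψ : Formula) : Formula := or (or (.not φ) ψ) (.and (indF φ) (indF ψ))

/-- `φ₁ ↔ φ₂ := (φ₁ → φ₂) ∧ (φ₂ → φ₁)`. -/
def iff (φ ψ : Formula) : Formula := .and (imp φ ψ) (imp ψ φ)

/-- `[α]φ := ¬⟨α⟩¬φ`. -/
def box (α : Program) (φ : Formula) : Formula := .not (.dia α (.not φ))

/-- `crash(α) := ind([α] 0 ≥ 0)`. -/
def crashF (α : Program) : Formula := indF (box α (.ge (.const 0) (.const 0)))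

end Formula

/-! ## Pathwise validity -/

/-- `T ⊨ φ`: φ holds at every interpretation whose stop times are `T`,
every valuation in `Val̂`, and every `ω`. -/
def Sat (S : SampleSpace) (T : Set ℝ) (φ : Formula) : Prop :=
  ∀ I : Interp S, I.times = T → ∀ (v : ValHat) (ω : S.Ω), fSem S I φ v ω 0 = L.tru

/-- `T ⊩⊩ φ`: every countable stop-time set `T′ ⊇ T` satisfies `T′ ⊨ φ`. -/
def Validates (S : SampleSpace) (T : Set ℝ) (φ : Formula) : Prop :=
  ∀ T' : Set ℝ, T'.Countable → (∀ t ∈ T', 0 ≤ t) → T ⊆ T' → Sat S T' φ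

/-- φ is pathwise valid iff some countable set of stop times validates it. -/
def PathwiseValid (S : SampleSpace) (φ : Formula) : Prop :=
  ∃ T : Set ℝ, T.Countable ∧ (∀ t ∈ T, 0 ≤ t) ∧ Validates S T φ

end

/-! The three-valued implication `φ₁ → φ₂` is `⊕` exactly when `⟦φ₁⟧ ≤ ⟦φ₂⟧`, and `[α]φ` is the
infimum, over all runs of `α`, of the value of `φ` at the final state (`⊘` at `▽`, `⊕` at `△`).
The induction hypothesis thus says that this value never decreases along one more iteration of
`α` from any state reached by `α*`; as every prefix of iterations is itself a run of `α*`, the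
value of `φ` at the start bounds it from below at the end of every run of `α*`. -/

namespace Cseq

theorem tailN_apply (n : ℕ) (C : Cseq) (k : ℕ) : (tailN n C).1 k = C.1 (n + k) := by
  induction n generalizing C with
  | zero => simp [tailN]
  | succ n ih =>
    rw [tailN, Function.iterate_succ_apply, ← tailN, ih]
    exact congrArg C.1 (by omega)

theorem nat_spec (C : Cseq) : C.1 C.nat = false := by
  have h : ∃ p, C.1 p = false := by
    by_contra! h
    exact Set.infinite_univ (C.2.subset fun p _ => by simpa using h p)
  exact Nat.sInf_mem h

theorem tailN_nat_apply_zero (C : Cseq) : (tailN C.nat C).1 0 = false := by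
  rw [tailN_apply, add_zero, nat_spec]

def prependTrue (j : ℕ) (E : Cseq) : Cseq :=
  ⟨fun k => if k < j then true else E.1 (k - j), by
    refine ((Set.finite_Iio j).union (E.2.image (· + j))).subset fun k hk => ?_
    by_cases hkj : k < j
    · exact Or.inl hkj
    · dsimp only [Set.mem_ofPred_eq] at hk
      rw [if_neg hkj] at hk
      exact Or.inr ⟨k - j, hk, by simp only; omega⟩⟩

theorem nat_prependTrue {E : Cseq} (hE : E.1 0 = false) (j : ℕ) : (prependTrue j E).nat = j := by
  refine le_antisymm (Nat.sInf_le (by simpa [prependTrue] using hE)) (le_of_not_gt fun h => ?_)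
  have h' : (prependTrue j E).1 (prependTrue j E).nat = true := if_pos h
  rw [nat_spec] at h'
  exact Bool.false_ne_true h'

theorem tailN_prependTrue (j : ℕ) (E : Cseq) : tailN j (prependTrue j E) = E :=
  Subtype.ext <| funext fun k => by
    rw [tailN_apply]
    show (if j + k < j then true else E.1 (j + k - j)) = E.1 k
    rw [if_neg (by omega), Nat.add_sub_cancel_left]

end Cseq

namespace L

theorem neg_le_neg_iff {a b : L} : neg a ≤ neg b ↔ b ≤ a := by
  revert a b; decide

theorem le_neg_comm {a b : L} : a ≤ neg b ↔ b ≤ neg a := by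
  revert a b; decide

theorem ind_le_of_ne_fls {a : L} : a ≠ fls → ind ≤ a := by
  revert a; decide

end L

section

variable {S : SampleSpace} {I : Interp S}

theorem pSem_crash (α : Program) (ω : S.Ω) (C : Cseq) (n : ℕ) :
    pSem S I α .crash ω C n = (.crash, C, n) := by
  cases α <;> simp only [pSem]

theorem pSem_oob (α : Program) (ω : S.Ω) (C : Cseq) (n : ℕ) :
    pSem S I α .oob ω C n = (.oob, C, n) := by
  cases α <;> simp only [pSem]

variable (S I) in
noncomputable def pStep (α : Program) (ω : S.Ω) (r : Val × Cseq × ℕ) : Val × Cseq × ℕ :=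
  pSem S I α r.1 ω r.2.1 r.2.2

theorem pSem_star (α : Program) (v : ValHat) (ω : S.Ω) (C : Cseq) (n : ℕ) :
    pSem S I (.star α) (.ok v) ω C n = (pStep S I α ω)^[C.nat] (.ok v, Cseq.tailN C.nat C, n) := by
  simp only [pSem]
  generalize C.nat = k
  generalize Val.ok v = u
  generalize Cseq.tailN k C = D
  induction k generalizing u D n with
  | zero => rfl
  | succ k ih => exact ih ..

theorem pSem_star_prependTrue (α : Program) (v : ValHat) (ω : S.Ω) {E : Cseq}
    (hE : E.1 0 = false) (j n : ℕ) :
    pSem S I (.star α) (.ok v) ω (Cseq.prependTrue j E) n =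
      (pStep S I α ω)^[j] (.ok v, E, n) := by
  rw [pSem_star, Cseq.nat_prependTrue hE, Cseq.tailN_prependTrue]

variable (S I) in
noncomputable def outcome (φ : Formula) (ω : S.Ω) : Val × Cseq × ℕ → L
  | (.ok w, _, m) => fSem S I φ w ω m
  | (.crash, _, _) => L.ind
  | (.oob, _, _) => L.tru

theorem fSem_imp_eq_tru_iff {φ ψ : Formula} {v : ValHat} {ω : S.Ω} {n : ℕ} :
    fSem S I (Formula.imp φ ψ) v ω n = L.tru ↔ fSem S I φ v ω n ≤ fSem S I ψ v ω n := by
  have cases : ∀ a : L, a = L.fls ∨ a = L.ind ∨ a = L.tru := by decide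
  simp only [Formula.imp, Formula.or, Formula.indF, fSem]
  rcases cases (fSem S I φ v ω n) with h | h | h <;>
    rcases cases (fSem S I ψ v ω n) with h' | h' | h' <;>
    simp only [h, h'] <;> decide

theorem le_fSem_box_iff {a : L} {α : Program} {φ : Formula} {v : ValHat} {ω : S.Ω} {n : ℕ} :
    a ≤ fSem S I (Formula.box α φ) v ω n ↔
      ∀ C, a ≤ outcome S I φ ω (pSem S I α (.ok v) ω C n) := by
  simp only [Formula.box, fSem]
  rw [L.le_neg_comm, sSup_le_iff]
  simp only [Set.mem_ofPred_eq, forall_exists_index, and_imp]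
  rw [forall_comm]
  refine forall_congr' fun C => ?_
  rcases pSem S I α (.ok v) ω C n with ⟨_ | _ | _, D, m⟩
  all_goals simp only [outcome, ne_eq, reduceCtorEq, not_false_eq_true, not_true_eq_false,
    forall_const, forall_eq, false_implies]
  · exact L.neg_le_neg_iff
  · exact L.neg_le_neg_iff (a := L.ind)
  · exact iff_of_true trivial (Fin.le_last a)

theorem fSem_sure {φ : Formula} {v : ValHat} {ω : S.Ω} {n : ℕ} :
    fSem S I (.sure φ) v ω n = if fSem S I φ v ω n = L.tru then L.tru else L.fls := by
  simp only [fSem]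

theorem ind_le_fSem_sure_iff {φ : Formula} {v : ValHat} {ω : S.Ω} {n : ℕ} :
    L.ind ≤ fSem S I (.sure φ) v ω n ↔ fSem S I φ v ω n = L.tru := by
  rw [fSem_sure]
  split_ifs with h
  · exact iff_of_true (by decide) h
  · exact iff_of_false (by decide) h

theorem outcome_le_outcome_pStep {α : Program} {φ : Formula} {ω : S.Ω} {r : Val × Cseq × ℕ}
    (h : L.ind ≤ outcome S I (.sure (Formula.imp φ (Formula.box α φ))) ω r) :
    outcome S I φ ω r ≤ outcome S I φ ω (pStep S I α ω r) := by
  rcases r with ⟨_ | _ | _, D, m⟩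
  · have hφ := fSem_imp_eq_tru_iff.1 (ind_le_fSem_sure_iff.1 h)
    exact hφ.trans (le_fSem_box_iff.1 le_rfl D)
  · rw [pStep, pSem_crash]
  · rw [pStep, pSem_oob]

end

/-- **Soundness of the loop induction axiom.**
The formula `[α*]sure(φ → [α]φ) → sure(φ → [α*]φ)` evaluates to `⊕` under
every interpretation, at every valuation in `Val̂` and every `ω`. -/
theorem loop_induction_axiom_sound (S : SampleSpace) (I : Interp S)
    (α : Program) (hα : α.WF) (φ : Formula) (hφ : φ.WF)
    (v : ValHat) (ω : S.Ω) :
    fSem S I (Formula.imp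
      (Formula.box (.star α) (.sure (Formula.imp φ (Formula.box α φ))))
      (.sure (Formula.imp φ (Formula.box (.star α) φ)))) v ω 0 = L.tru := by
  rw [fSem_imp_eq_tru_iff]
  rcases eq_or_ne (fSem S I (Formula.box (.star α) (.sure (Formula.imp φ (Formula.box α φ)))) v ω 0)
    L.fls with hA | hA
  · rw [hA]
    exact Fin.zero_le _
  have hstep := le_fSem_box_iff.1 (L.ind_le_of_ne_fls hA)
  suffices fSem S I φ v ω 0 ≤ fSem S I (Formula.box (.star α) φ) v ω 0 by
    rw [fSem_sure, if_pos (fSem_imp_eq_tru_iff.2 this)]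
    exact Fin.le_last _
  refine le_fSem_box_iff.2 fun C => ?_
  have hE := Cseq.tailN_nat_apply_zero C
  rw [pSem_star]
  refine monotone_nat_of_le_succ (fun j => ?_) (Nat.zero_le C.nat)
    (f := fun j => outcome S I φ ω ((pStep S I α ω)^[j] (.ok v, Cseq.tailN C.nat C, 0)))
  rw [Function.iterate_succ_apply', ← pSem_star_prependTrue α v ω hE]
  exact outcome_le_outcome_pStep (hstep _)
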